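/- arXiv:2206.03464 — 4 statements merged into one kernel-verified Lean document; each statement's English description precedes it below -/
import Mathlib

section
/- If a matrix M in the n×n integer matrices is power-bounded, i.e., there exists N such that every entry of every power M^m (m ≥ 1) has absolute value less than N, and M is invertible over the integers, then M has finite order: M^m = I for some m ≥ 1. -/
/-! Bounded integer entries confine the powers of `M` to a finite set, so two of them coincide,
`M ^ a = M ^ b` with `a < b`; cancelling the unit `M ^ a` gives `M ^ (b - a) = 1`. -/

theorem Matrix.finite_setOf_abs_lt {m n : Type*} [Fintype m] [Fintype n] (N : ℤ) :
    {A : Matrix m n ℤ | ∀ i j, |A i j| < N}.Finite := by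
  have hbox : (Set.univ.pi fun _ : m => Set.univ.pi fun _ : n => Set.Ioo (-N) N).Finite :=
    Set.Finite.pi fun _ => Set.Finite.pi fun _ => Set.finite_Ioo _ _
  refine hbox.subset fun A hA i _ j _ => ?_
  exact abs_lt.mp (hA i j)

theorem IsUnit.isOfFinOrder_of_finite_range_pow_succ {M : Type*} [Monoid M] {x : M}
    (hx : IsUnit x) (h : (Set.range fun m : ℕ => x ^ (m + 1)).Finite) : IsOfFinOrder x := by
  obtain ⟨u, rfl⟩ := hx
  have hpowers : (Submonoid.powers u : Set Mˣ) ⊆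
      Units.val ⁻¹' insert 1 (Set.range fun m => (u : M) ^ (m + 1)) := by
    rintro _ ⟨_ | m, rfl⟩
    · simp
    · exact Set.mem_insert_of_mem _ ⟨m, by simp⟩
  have hfin : (Submonoid.powers u : Set Mˣ).Finite :=
    ((h.insert 1).preimage Units.val_injective.injOn).subset hpowers
  exact Units.isOfFinOrder_val.mpr (finite_powers.mp hfin)

theorem power_bounded_unit_finite_order {n : ℕ} (M : Matrix (Fin n) (Fin n) ℤ)
    (hM : IsUnit M)
    (hbd : ∃ N : ℕ, ∀ m : ℕ, 1 ≤ m → ∀ i j : Fin n, |(M ^ m) i j| < (N : ℤ)) :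
    ∃ m : ℕ, 1 ≤ m ∧ M ^ m = 1 := by
  obtain ⟨N, hN⟩ := hbd
  have hfin : (Set.range fun m : ℕ => M ^ (m + 1)).Finite := by
    refine (Matrix.finite_setOf_abs_lt (N : ℤ)).subset ?_
    rintro _ ⟨m, rfl⟩
    exact hN (m + 1) m.succ_pos
  exact isOfFinOrder_iff_pow_eq_one.mp (hM.isOfFinOrder_of_finite_range_pow_succ hfin)
end

section
/- Let k be a field and L_n = k[z_1^{±1}, …, z_n^{±1}]. The group Aut_k(L_n) of k-algebra automorphisms of L_n is isomorphic to the semidirect product GL(n, ℤ) ⋉ (k*)^n, where an automorphism σ corresponds to a pair (M, α) via σ(z_i) = α_i · z_1^{M[1,i]} ⋯ z_n^{M[n,i]}. -/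
open Finsupp

namespace LaurentAutAux

noncomputable instance lexInst (n : ℕ) : LinearOrder (Lex (Fin n → ℤ)) :=
  inferInstance

variable {k : Type*} [Field k] {n : ℕ}

theorem uniqueAdd_max {G : Type*} [AddCommGroup G] [LinearOrder G] [IsOrderedAddMonoid G] {A B : Finset G}
    (hA : A.Nonempty) (hB : B.Nonempty) :
    UniqueAdd A B (A.max' hA) (B.max' hB) := by
  intro a b ha hb hab
  have h1 : a ≤ A.max' hA := Finset.le_max' _ _ ha
  have h2 : b ≤ B.max' hB := Finset.le_max' _ _ hb
  have haa : a = A.max' hA := by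
    by_contra hne
    exact absurd hab (ne_of_lt (add_lt_add_of_lt_of_le (lt_of_le_of_ne h1 hne) h2))
  refine ⟨haa, ?_⟩
  rw [haa] at hab
  exact add_left_cancel hab

theorem uniqueAdd_min {G : Type*} [AddCommGroup G] [LinearOrder G] [IsOrderedAddMonoid G] {A B : Finset G}
    (hA : A.Nonempty) (hB : B.Nonempty) :
    UniqueAdd A B (A.min' hA) (B.min' hB) := by
  intro a b ha hb hab
  have h1 : A.min' hA ≤ a := A.min'_le _ ha
  have h2 : B.min' hB ≤ b := B.min'_le _ hb
  have haa : a = A.min' hA := by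
    by_contra hne
    exact absurd hab.symm
      (ne_of_lt (add_lt_add_of_lt_of_le (lt_of_le_of_ne h1 (Ne.symm hne)) h2))
  refine ⟨haa, ?_⟩
  rw [haa] at hab
  exact add_left_cancel hab

theorem eq_single_of_mul_eq_one {G : Type*} [AddCommGroup G] [LinearOrder G] [IsOrderedAddMonoid G]
    {f g : AddMonoidAlgebra k G} (h : f * g = 1) :
    ∃ (a : G) (c : kˣ), f = AddMonoidAlgebra.single a (c : k) := by
  have hf : f ≠ 0 := by rintro rfl; rw [zero_mul] at h; exact one_ne_zero h.symm
  have hg : g ≠ 0 := by rintro rfl; rw [mul_zero] at h; exact one_ne_zero h.symm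
  have hfs : f.coeff.support.Nonempty := Finsupp.support_nonempty_iff.mpr (mt AddMonoidAlgebra.coeff_eq_zero.mp hf)
  have hgs : g.coeff.support.Nonempty := Finsupp.support_nonempty_iff.mpr (mt AddMonoidAlgebra.coeff_eq_zero.mp hg)
  have hone : (1 : AddMonoidAlgebra k G).coeff.support = {0} := by
    rw [AddMonoidAlgebra.one_def]
    exact Finsupp.support_single_ne_zero _ one_ne_zero
  have key : ∀ a0 b0, UniqueAdd f.coeff.support g.coeff.support a0 b0 → a0 ∈ f.coeff.support → b0 ∈ g.coeff.support →
      a0 + b0 = 0 := by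
    intro a0 b0 hu ha hb
    have h1 := AddMonoidAlgebra.coeff_mul_add_of_uniqueAdd hu
    have hne : (f * g).coeff (a0 + b0) ≠ 0 := by
      rw [h1]
      exact mul_ne_zero (Finsupp.mem_support_iff.mp ha) (Finsupp.mem_support_iff.mp hb)
    have hmem : a0 + b0 ∈ (f * g).coeff.support := Finsupp.mem_support_iff.mpr hne
    rw [h, hone] at hmem
    exact Finset.mem_singleton.mp hmem
  have hmax := key _ _ (uniqueAdd_max hfs hgs) (f.coeff.support.max'_mem hfs) (g.coeff.support.max'_mem hgs)
  have hmin := key _ _ (uniqueAdd_min hfs hgs) (f.coeff.support.min'_mem hfs) (g.coeff.support.min'_mem hgs)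
  have heq : f.coeff.support.min' hfs = f.coeff.support.max' hfs := by
    by_contra hne
    have h1 : f.coeff.support.min' hfs < f.coeff.support.max' hfs :=
      lt_of_le_of_ne (f.coeff.support.min'_le _ (f.coeff.support.max'_mem hfs)) hne
    have h2 : g.coeff.support.min' hgs ≤ g.coeff.support.max' hgs :=
      g.coeff.support.min'_le _ (g.coeff.support.max'_mem hgs)
    have := add_lt_add_of_lt_of_le h1 h2
    rw [hmin, hmax] at this
    exact lt_irrefl 0 this
  have hsub : f.coeff.support ⊆ {f.coeff.support.max' hfs} := by
    intro a ha
    rw [Finset.mem_singleton]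
    exact le_antisymm (Finset.le_max' _ _ ha) (heq ▸ f.coeff.support.min'_le _ ha)
  have hf2 := Finsupp.support_subset_singleton.mp hsub
  have hc : f.coeff (f.coeff.support.max' hfs) ≠ 0 := Finsupp.mem_support_iff.mp (f.coeff.support.max'_mem hfs)
  exact ⟨_, Units.mk0 _ hc, AddMonoidAlgebra.coeff_injective hf2⟩

/-- `cp α a = ∏ i, α i ^ a i`. -/
noncomputable def cp (α : Fin n → kˣ) (a : Fin n → ℤ) : kˣ := ∏ i, α i ^ a i

lemma cp_add (α : Fin n → kˣ) (a b : Fin n → ℤ) : cp α (a + b) = cp α a * cp α b := by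
  simp only [cp, Pi.add_apply, zpow_add, Finset.prod_mul_distrib]

lemma cp_zero (α : Fin n → kˣ) : cp α 0 = 1 := by simp [cp]

lemma cp_single (α : Fin n → kˣ) (i : Fin n) : cp α (Pi.single i 1) = α i := by
  unfold cp
  rw [Finset.prod_eq_single i]
  · rw [Pi.single_eq_same, zpow_one]
  · intro b _ hb
    rw [Pi.single_eq_of_ne hb, zpow_zero]
  · intro hmem
    exact absurd (Finset.mem_univ i) hmem

lemma cp_mul_family (γ α : Fin n → kˣ) (a : Fin n → ℤ) :
    cp (fun i => γ i * α i) a = cp γ a * cp α a := by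
  simp only [cp, mul_zpow, Finset.prod_mul_distrib]

lemma cp_inv_family (α : Fin n → kˣ) (a : Fin n → ℤ) :
    cp (fun i => (α i)⁻¹) a = (cp α a)⁻¹ := by
  simp only [cp, inv_zpow]
  rw [← Finset.prod_inv_distrib]

lemma zpow_fsum {ι : Type*} (x : kˣ) (s : Finset ι) (f : ι → ℤ) :
    x ^ (∑ i ∈ s, f i) = ∏ i ∈ s, x ^ f i := by
  classical
  induction s using Finset.cons_induction with
  | empty => simp
  | cons a s ha ih => rw [Finset.sum_cons, Finset.prod_cons, zpow_add, ih]

lemma cp_mulVec (β : Fin n → kˣ) (M : Matrix (Fin n) (Fin n) ℤ) (a : Fin n → ℤ) :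
    cp β (M.mulVec a) = cp (fun i => ∏ j, β j ^ M j i) a := by
  unfold cp
  have h1 : ∀ j, β j ^ (M.mulVec a j) = ∏ i, (β j ^ M j i) ^ a i := by
    intro j
    show β j ^ (∑ i, M j i * a i) = _
    rw [zpow_fsum]
    exact Finset.prod_congr rfl fun i _ => zpow_mul _ _ _
  simp_rw [h1]
  rw [Finset.prod_comm]
  exact Finset.prod_congr rfl fun i _ => Finset.prod_zpow _ _ _

/-- The monomial monoid hom underlying `phiHom`. -/
noncomputable def mono (M : Matrix (Fin n) (Fin n) ℤ) (α : Fin n → kˣ) :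
    Multiplicative (Fin n → ℤ) →* AddMonoidAlgebra k (Fin n → ℤ) where
  toFun a := AddMonoidAlgebra.single (M.mulVec (Multiplicative.toAdd a))
    ((cp α (Multiplicative.toAdd a) : kˣ) : k)
  map_one' := by
    show AddMonoidAlgebra.single (M.mulVec 0) ((cp α 0 : kˣ) : k) = 1
    rw [Matrix.mulVec_zero, cp_zero, Units.val_one, AddMonoidAlgebra.one_def]
  map_mul' a b := by
    show AddMonoidAlgebra.single (M.mulVec (Multiplicative.toAdd a + Multiplicative.toAdd b)) _
      = _
    rw [AddMonoidAlgebra.single_mul_single, Matrix.mulVec_add, toAdd_mul,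
      cp_add, Units.val_mul]

/-- The algebra endomorphism of the Laurent algebra attached to `(M, α)`. -/
noncomputable def phiHom (M : Matrix (Fin n) (Fin n) ℤ) (α : Fin n → kˣ) :
    AddMonoidAlgebra k (Fin n → ℤ) →ₐ[k] AddMonoidAlgebra k (Fin n → ℤ) :=
  AddMonoidAlgebra.lift k _ (Fin n → ℤ) (mono M α)

lemma phiHom_single (M : Matrix (Fin n) (Fin n) ℤ) (α : Fin n → kˣ) (a : Fin n → ℤ) (c : k) :
    phiHom M α (AddMonoidAlgebra.single a c) =
      AddMonoidAlgebra.single (M.mulVec a) (c * ((cp α a : kˣ) : k)) := by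
  rw [phiHom, AddMonoidAlgebra.lift_single]
  show c • AddMonoidAlgebra.single (M.mulVec a) ((cp α a : kˣ) : k) = _
  rw [AddMonoidAlgebra.smul_single']

lemma phiHom_z (M : Matrix (Fin n) (Fin n) ℤ) (α : Fin n → kˣ) (i : Fin n) :
    phiHom M α (AddMonoidAlgebra.single (Pi.single i 1) (1 : k)) =
      AddMonoidAlgebra.single (fun j => M j i) ((α i : k)) := by
  rw [phiHom_single, one_mul, cp_single, Matrix.mulVec_single]
  congr 1; funext j; simp

lemma phiHom_comp (N M : Matrix (Fin n) (Fin n) ℤ) (β α : Fin n → kˣ) :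
    (phiHom (k := k) N β).comp (phiHom M α) =
      phiHom (N * M) (fun i => (∏ j, β j ^ M j i) * α i) := by
  refine AddMonoidAlgebra.algHom_ext ?_ (Subsingleton.elim _ _)
  intro a
  rw [AlgHom.comp_apply, phiHom_single, phiHom_single, phiHom_single, Matrix.mulVec_mulVec]
  congr 1
  rw [one_mul, one_mul, ← Units.val_mul]
  exact congrArg Units.val (by rw [cp_mul_family, cp_mulVec, mul_comm])

lemma phiHom_id : phiHom (k := k) (n := n) 1 1 = AlgHom.id k _ := by
  refine AddMonoidAlgebra.algHom_ext ?_ (Subsingleton.elim _ _)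
  intro a
  rw [phiHom_single, Matrix.one_mulVec, AlgHom.id_apply]
  have : cp (1 : Fin n → kˣ) a = 1 := by simp [cp]
  rw [this, Units.val_one, mul_one]

lemma phiHom_inj {M M' : Matrix (Fin n) (Fin n) ℤ} {α α' : Fin n → kˣ}
    (h : phiHom (k := k) M α = phiHom M' α') : M = M' ∧ α = α' := by
  have hz : ∀ i, (AddMonoidAlgebra.single (fun j => M j i) ((α i : k))
      : AddMonoidAlgebra k (Fin n → ℤ)) =
      AddMonoidAlgebra.single (fun j => M' j i) ((α' i : k)) := by
    intro i
    rw [← phiHom_z M α i, ← phiHom_z M' α' i, h]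
  have hz' : ∀ i, ((fun j => M j i) = fun j => M' j i) ∧ ((α i : k) = (α' i : k)) := by
    intro i
    rcases AddMonoidAlgebra.single_inj.mp (hz i) with h1 | h1
    · exact h1
    · exact absurd h1.1 (α i).ne_zero
  constructor
  · ext j i
    exact congrFun (hz' i).1 j
  · funext i
    exact Units.ext (hz' i).2

lemma hom_apply {H : Type*} [CommGroup H] (ψ : Multiplicative (Fin n → ℤ) →* H)
    (a : Fin n → ℤ) :
    ψ (Multiplicative.ofAdd a) =
      ∏ i, ψ (Multiplicative.ofAdd (Pi.single i 1)) ^ (a i) := by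
  have hsum : a = ∑ i, a i • Pi.single i (1 : ℤ) := by
    funext j
    rw [Finset.sum_apply]
    simp [Pi.single_apply, mul_ite, Finset.sum_ite_eq]
  have h2 : (Multiplicative.ofAdd a) =
      ∏ i, (Multiplicative.ofAdd (Pi.single i (1 : ℤ))) ^ (a i) := by
    conv_lhs => rw [hsum]
    rw [ofAdd_sum]
    exact Finset.prod_congr rfl fun i _ => ofAdd_zsmul _ _
  rw [h2, map_prod]
  exact Finset.prod_congr rfl fun i _ => map_zpow ψ _ _

lemma algHom_ext_units {ψ₁ ψ₂ : AddMonoidAlgebra k (Fin n → ℤ) →ₐ[k] AddMonoidAlgebra k (Fin n → ℤ)}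
    (h : ∀ i : Fin n, ψ₁ (AddMonoidAlgebra.single (Pi.single i 1) (1 : k)) =
      ψ₂ (AddMonoidAlgebra.single (Pi.single i 1) (1 : k))) : ψ₁ = ψ₂ := by
  refine AddMonoidAlgebra.algHom_ext ?_ (Subsingleton.elim _ _)
  intro a
  set U : Multiplicative (Fin n → ℤ) →* (AddMonoidAlgebra k (Fin n → ℤ))ˣ :=
    (AddMonoidAlgebra.of k (Fin n → ℤ)).toHomUnits with hU
  have key : ∀ ψ : AddMonoidAlgebra k (Fin n → ℤ) →ₐ[k] AddMonoidAlgebra k (Fin n → ℤ),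
      ∀ a : Fin n → ℤ, ψ (AddMonoidAlgebra.single a 1) =
        (((Units.map (ψ : AddMonoidAlgebra k (Fin n → ℤ) →* AddMonoidAlgebra k (Fin n → ℤ))).comp U)
          (Multiplicative.ofAdd a) : (AddMonoidAlgebra k (Fin n → ℤ))ˣ) := by
    intro ψ a
    rw [MonoidHom.comp_apply, Units.coe_map]
    rw [MonoidHom.coe_toHomUnits, AddMonoidAlgebra.of_apply]
    rfl
  rw [key ψ₁ a, key ψ₂ a, hom_apply, hom_apply]
  congr 1
  refine Finset.prod_congr rfl fun i _ => ?_
  congr 1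
  apply Units.ext
  rw [MonoidHom.comp_apply, MonoidHom.comp_apply, Units.coe_map, Units.coe_map,
    MonoidHom.coe_toHomUnits, AddMonoidAlgebra.of_apply]
  exact h i


/-- The automorphism attached to a pair `(M, α) : GL(n,ℤ) × (kˣ)ⁿ`. -/
noncomputable def G0 (p : GL (Fin n) ℤ × (Fin n → kˣ)) :
    AddMonoidAlgebra k (Fin n → ℤ) ≃ₐ[k] AddMonoidAlgebra k (Fin n → ℤ) :=
  AlgEquiv.ofAlgHom (phiHom (p.1 : Matrix (Fin n) (Fin n) ℤ) p.2)
    (phiHom ((p.1⁻¹ : GL (Fin n) ℤ) : Matrix (Fin n) (Fin n) ℤ)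
      (fun i => (∏ j, p.2 j ^ (((p.1⁻¹ : GL (Fin n) ℤ) : Matrix (Fin n) (Fin n) ℤ) j i))⁻¹))
    (by
      rw [phiHom_comp]
      have hM : (p.1 : Matrix (Fin n) (Fin n) ℤ) *
          ((p.1⁻¹ : GL (Fin n) ℤ) : Matrix (Fin n) (Fin n) ℤ) = 1 := p.1.mul_inv
      have hα : (fun i => (∏ j, p.2 j ^
          (((p.1⁻¹ : GL (Fin n) ℤ) : Matrix (Fin n) (Fin n) ℤ) j i)) *
          (∏ j, p.2 j ^ (((p.1⁻¹ : GL (Fin n) ℤ) : Matrix (Fin n) (Fin n) ℤ) j i))⁻¹)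
          = (1 : Fin n → kˣ) := by
        funext i
        exact mul_inv_cancel _
      rw [hM, hα, phiHom_id])
    (by
      rw [phiHom_comp]
      have hM : ((p.1⁻¹ : GL (Fin n) ℤ) : Matrix (Fin n) (Fin n) ℤ) *
          (p.1 : Matrix (Fin n) (Fin n) ℤ) = 1 := p.1.inv_mul
      have hα : (fun i => (∏ j, (∏ l, p.2 l ^
          (((p.1⁻¹ : GL (Fin n) ℤ) : Matrix (Fin n) (Fin n) ℤ) l j))⁻¹ ^
          ((p.1 : Matrix (Fin n) (Fin n) ℤ) j i)) * p.2 i) = (1 : Fin n → kˣ) := by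
        funext i
        have h1 : (fun j => (∏ l, p.2 l ^
            (((p.1⁻¹ : GL (Fin n) ℤ) : Matrix (Fin n) (Fin n) ℤ) l j))⁻¹)
            = fun j => (cp (fun i => ∏ l, p.2 l ^
              (((p.1⁻¹ : GL (Fin n) ℤ) : Matrix (Fin n) (Fin n) ℤ) l i)) (Pi.single j 1))⁻¹ := by
          funext j
          rw [cp_single]
        have h2 : (∏ j, (∏ l, p.2 l ^
            (((p.1⁻¹ : GL (Fin n) ℤ) : Matrix (Fin n) (Fin n) ℤ) l j))⁻¹ ^
            ((p.1 : Matrix (Fin n) (Fin n) ℤ) j i)) = (p.2 i)⁻¹ := by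
          have h3 := cp_mulVec (fun j => (∏ l, p.2 l ^
            (((p.1⁻¹ : GL (Fin n) ℤ) : Matrix (Fin n) (Fin n) ℤ) l j))⁻¹)
            (p.1 : Matrix (Fin n) (Fin n) ℤ) (Pi.single i 1)
          rw [cp_single] at h3
          rw [← h3, cp_inv_family, ← cp_mulVec, Matrix.mulVec_mulVec, hM,
            Matrix.one_mulVec, cp_single]
        rw [h2]
        exact inv_mul_cancel _
      rw [hM, hα, phiHom_id])

lemma G0_apply (p : GL (Fin n) ℤ × (Fin n → kˣ)) (x : AddMonoidAlgebra k (Fin n → ℤ)) :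
    G0 p x = phiHom (p.1 : Matrix (Fin n) (Fin n) ℤ) p.2 x := rfl

lemma G0_mul (p q : GL (Fin n) ℤ × (Fin n → kˣ)) :
    G0 (k := k) p * G0 q = G0 (p.1 * q.1,
      fun i => (∏ j, p.2 j ^ ((q.1 : Matrix (Fin n) (Fin n) ℤ) j i)) * q.2 i) := by
  apply AlgEquiv.ext
  intro x
  rw [AlgEquiv.mul_apply, G0_apply, G0_apply, G0_apply, ← AlgHom.comp_apply, phiHom_comp]
  have : ((p.1 * q.1 : GL (Fin n) ℤ) : Matrix (Fin n) (Fin n) ℤ)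
      = (p.1 : Matrix (Fin n) (Fin n) ℤ) * (q.1 : Matrix (Fin n) (Fin n) ℤ) := Units.val_mul _ _
  rw [this]

lemma G0_injective : Function.Injective (G0 (k := k) (n := n)) := by
  intro p q h
  have h2 : phiHom (p.1 : Matrix (Fin n) (Fin n) ℤ) p.2
      = phiHom (q.1 : Matrix (Fin n) (Fin n) ℤ) q.2 :=
    AlgHom.ext fun x => by
      have := congrArg (fun e : AddMonoidAlgebra k (Fin n → ℤ) ≃ₐ[k] AddMonoidAlgebra k (Fin n → ℤ)
        => e x) h
      simpa [G0_apply] using this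
  obtain ⟨hM, hα⟩ := phiHom_inj h2
  exact Prod.ext (Units.ext hM) hα

lemma G0_surjective : Function.Surjective (G0 (k := k) (n := n)) := by
  intro σ
  have hu : ∀ i : Fin n, ∃ (a : Fin n → ℤ) (c : kˣ),
      σ (AddMonoidAlgebra.single (Pi.single i 1) (1 : k)) = AddMonoidAlgebra.single a (c : k) := by
    intro i
    have h1 : σ (AddMonoidAlgebra.single (Pi.single i 1) (1 : k)) *
        σ (AddMonoidAlgebra.single (-Pi.single i 1) (1 : k)) = 1 := by
      rw [← map_mul, AddMonoidAlgebra.single_mul_single, one_mul, add_neg_cancel,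
        ← AddMonoidAlgebra.one_def, map_one]
    exact eq_single_of_mul_eq_one (G := Lex (Fin n → ℤ)) h1
  choose m c hmc using hu
  have husymm : ∀ i : Fin n, ∃ (a : Fin n → ℤ) (c : kˣ),
      σ.symm (AddMonoidAlgebra.single (Pi.single i 1) (1 : k))
        = AddMonoidAlgebra.single a (c : k) := by
    intro i
    have h1 : σ.symm (AddMonoidAlgebra.single (Pi.single i 1) (1 : k)) *
        σ.symm (AddMonoidAlgebra.single (-Pi.single i 1) (1 : k)) = 1 := by
      rw [← map_mul, AddMonoidAlgebra.single_mul_single, one_mul, add_neg_cancel,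
        ← AddMonoidAlgebra.one_def, map_one]
    exact eq_single_of_mul_eq_one (G := Lex (Fin n → ℤ)) h1
  choose m' c' hmc' using husymm
  set M : Matrix (Fin n) (Fin n) ℤ := Matrix.of (fun j i => m i j) with hMdef
  set M' : Matrix (Fin n) (Fin n) ℤ := Matrix.of (fun j i => m' i j) with hM'def
  have hψ : σ.toAlgHom = phiHom M c := by
    apply algHom_ext_units
    intro i
    show σ _ = _
    rw [hmc i, phiHom_z]
    exact rfl
  have hψ' : σ.symm.toAlgHom = phiHom M' c' := by
    apply algHom_ext_units
    intro i
    show σ.symm _ = _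
    rw [hmc' i, phiHom_z]
    exact rfl
  have hid1 : (phiHom (k := k) M c).comp (phiHom M' c') = phiHom 1 1 := by
    rw [← hψ, ← hψ', phiHom_id]
    exact AlgHom.ext fun x => σ.apply_symm_apply x
  have hid2 : (phiHom (k := k) M' c').comp (phiHom M c) = phiHom 1 1 := by
    rw [← hψ, ← hψ', phiHom_id]
    exact AlgHom.ext fun x => σ.symm_apply_apply x
  rw [phiHom_comp] at hid1 hid2
  have hMM' : M * M' = 1 := (phiHom_inj hid1).1
  have hM'M : M' * M = 1 := (phiHom_inj hid2).1
  refine ⟨(⟨M, M', hMM', hM'M⟩, c), ?_⟩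
  apply AlgEquiv.ext
  intro x
  rw [G0_apply]
  exact (congrArg (fun ψ : AddMonoidAlgebra k (Fin n → ℤ) →ₐ[k] AddMonoidAlgebra k (Fin n → ℤ)
    => ψ x) hψ).symm

end LaurentAutAux

open LaurentAutAux in
/-- The automorphism group of the Laurent polynomial algebra
`L_n = k[z_1^{±1},…,z_n^{±1}]` (realized as the group algebra of `ℤ^n` over `k`) is
isomorphic to the semidirect product `GL(n,ℤ) ⋉ (k*)^n`: there is a bijection `F` from
`Aut_k(L_n)` to pairs `(M, α)` such that `σ(z_i) = α_i · z^{M[-,i]}` and such that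
composition of automorphisms corresponds to the semidirect product law
`(N, β)(M, α) = (NM, β^M α)`. -/
theorem laurent_aut_iso_semidirect (k : Type*) [Field k] (n : ℕ) :
    ∃ F : (AddMonoidAlgebra k (Fin n → ℤ) ≃ₐ[k] AddMonoidAlgebra k (Fin n → ℤ)) ≃
        (GL (Fin n) ℤ × (Fin n → kˣ)),
      (∀ σ, ∀ i : Fin n, σ (AddMonoidAlgebra.single (Pi.single i 1) (1 : k)) =
        AddMonoidAlgebra.single
          (fun j => ((F σ).1 : Matrix (Fin n) (Fin n) ℤ) j i) (((F σ).2 i : k))) ∧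
      (∀ σ τ, F (τ * σ) =
        ((F τ).1 * (F σ).1,
          fun i => (∏ j, (F τ).2 j ^ (((F σ).1 : Matrix (Fin n) (Fin n) ℤ) j i))
            * (F σ).2 i)) := by
  have hbij : Function.Bijective (G0 (k := k) (n := n)) := ⟨G0_injective, G0_surjective⟩
  set E := Equiv.ofBijective _ hbij with hE
  refine ⟨E.symm, ?_, ?_⟩
  · intro σ i
    have hσ : G0 (E.symm σ) = σ := Equiv.ofBijective_apply_symm_apply _ hbij σ
    conv_lhs => rw [← hσ]
    rw [G0_apply, phiHom_z]
  · intro σ τ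
    rw [Equiv.symm_apply_eq]
    have hσ : G0 (E.symm σ) = σ := Equiv.ofBijective_apply_symm_apply _ hbij σ
    have hτ : G0 (E.symm τ) = τ := Equiv.ofBijective_apply_symm_apply _ hbij τ
    conv_lhs => rw [← hσ, ← hτ]
    exact (G0_mul _ _).trans rfl
end

section
/- Let σ be the automorphism of L_n determined by (M, α) with M ∈ GL(n,ℤ), α ∈ (k*)^n. If M is not power-bounded, then σ is not locally algebraic: there exists an element p ∈ L_n (in fact a variable z_j) such that {σ^m(p) : m ∈ ℕ} spans an infinite-dimensional k-subspace. -/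
noncomputable def zUnit (k : Type*) [Field k] {n : ℕ} (v : Fin n → ℤ) :
    (AddMonoidAlgebra k (Fin n → ℤ))ˣ :=
  ⟨AddMonoidAlgebra.single v 1, AddMonoidAlgebra.single (-v) 1,
   by rw [AddMonoidAlgebra.single_mul_single]; simp [AddMonoidAlgebra.one_def],
   by rw [AddMonoidAlgebra.single_mul_single]; simp [AddMonoidAlgebra.one_def]⟩

@[simp] lemma zUnit_val (k : Type*) [Field k] {n : ℕ} (v : Fin n → ℤ) :
    (zUnit k v : AddMonoidAlgebra k (Fin n → ℤ)) = AddMonoidAlgebra.single v 1 := rfl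

lemma zUnit_add (k : Type*) [Field k] {n : ℕ} (v w : Fin n → ℤ) :
    zUnit k (v + w) = zUnit k v * zUnit k w := by
  ext
  simp [AddMonoidAlgebra.single_mul_single]

lemma sigma_single {k : Type*} [Field k] {n : ℕ}
    (σ : AddMonoidAlgebra k (Fin n → ℤ) ≃ₐ[k] AddMonoidAlgebra k (Fin n → ℤ))
    (M : Matrix (Fin n) (Fin n) ℤ) (α : Fin n → kˣ)
    (hσ : ∀ i : Fin n, σ (AddMonoidAlgebra.single (Pi.single i 1) (1 : k)) =
      AddMonoidAlgebra.single (fun j => M j i) ((α i : k))) (v : Fin n → ℤ) :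
    σ (AddMonoidAlgebra.single v (1 : k)) =
      AddMonoidAlgebra.single (M.mulVec v) (((∏ i, α i ^ v i : kˣ) : k)) := by
  set A := AddMonoidAlgebra k (Fin n → ℤ) with hA
  let σm : A →* A := σ.toAlgHom.toRingHom.toMonoidHom
  let aU : kˣ →* Aˣ := Units.map (algebraMap k A).toMonoidHom
  have halg : ∀ (c : k) (w : Fin n → ℤ),
      (algebraMap k A c) * AddMonoidAlgebra.single w (1 : k) = AddMonoidAlgebra.single w c := by
    intro c w
    rw [Algebra.algebraMap_eq_smul_one, smul_mul_assoc, one_mul,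
      AddMonoidAlgebra.smul_single', mul_one]
  let F : (Fin n → ℤ) →+ Additive Aˣ := AddMonoidHom.mk'
    (fun v => Additive.ofMul (Units.map σm (zUnit k v)))
    (by
      intro v w
      exact congrArg Additive.ofMul (by rw [zUnit_add, map_mul]; rfl))
  let G : (Fin n → ℤ) →+ Additive Aˣ := AddMonoidHom.mk'
    (fun v => Additive.ofMul (aU (∏ i, α i ^ v i) * zUnit k (M.mulVec v)))
    (by
      intro v w
      have h1 : M.mulVec (v + w) = M.mulVec v + M.mulVec w := Matrix.mulVec_add M v w
      have h2 : (∏ i, α i ^ (v + w) i) = (∏ i, α i ^ v i) * ∏ i, α i ^ w i := by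
        rw [← Finset.prod_mul_distrib]
        exact Finset.prod_congr rfl fun i _ => by rw [Pi.add_apply, zpow_add]
      exact congrArg Additive.ofMul
        (by rw [h1, h2, zUnit_add, map_mul]; exact mul_mul_mul_comm _ _ _ _))
  have hFG : F = G := by
    apply AddMonoidHom.functions_ext
    intro i x
    have hx : Pi.single i x = x • (Pi.single i 1 : Fin n → ℤ) := by
      ext l
      simp [Pi.single_apply, mul_ite]
    rw [hx, map_zsmul, map_zsmul]
    congr 1
    refine congrArg Additive.ofMul (Units.ext ?_)
    have hprod : (∏ l, α l ^ (Pi.single i 1 : Fin n → ℤ) l) = α i := by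
      rw [Finset.prod_eq_single i]
      · simp
      · intro b _ hb; simp [Pi.single_apply, hb]
      · simp
    show σ (AddMonoidAlgebra.single (Pi.single i 1) (1 : k)) =
      (algebraMap k A ((∏ l, α l ^ (Pi.single i 1 : Fin n → ℤ) l : kˣ) : k)) *
        AddMonoidAlgebra.single (M.mulVec (Pi.single i 1)) (1 : k)
    rw [hσ i, hprod, halg]
    congr 1
    funext l
    simp [Matrix.mulVec_single]
  have h := DFunLike.congr_fun hFG v
  have h2 : ((Units.map σm (zUnit k v) : Aˣ) : A) =
      ((aU (∏ i, α i ^ v i) * zUnit k (M.mulVec v) : Aˣ) : A) :=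
    congrArg (fun u : Additive Aˣ => ((Additive.toMul u : Aˣ) : A)) h
  have h3 : ((aU (∏ i, α i ^ v i) * zUnit k (M.mulVec v) : Aˣ) : A) =
      AddMonoidAlgebra.single (M.mulVec v) (((∏ i, α i ^ v i : kˣ) : k)) := by
    rw [Units.val_mul, zUnit_val,
      show ((aU (∏ i, α i ^ v i) : Aˣ) : A) = algebraMap k A ((∏ i, α i ^ v i : kˣ) : k) from rfl,
      halg]
  exact h2.trans h3

/-- If the matrix `M` of the automorphism `σ = (M, α)` of the Laurent polynomial algebra
`L_n` is not power-bounded, then `σ` is not locally algebraic: the orbit of some variable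
`z_j` spans an infinite-dimensional subspace. -/
theorem laurent_aut_not_power_bounded_not_locallyAlgebraic (k : Type*) [Field k] (n : ℕ)
    (σ : AddMonoidAlgebra k (Fin n → ℤ) ≃ₐ[k] AddMonoidAlgebra k (Fin n → ℤ))
    (M : Matrix (Fin n) (Fin n) ℤ) (α : Fin n → kˣ)
    (hσ : ∀ i : Fin n, σ (AddMonoidAlgebra.single (Pi.single i 1) (1 : k)) =
      AddMonoidAlgebra.single (fun j => M j i) ((α i : k)))
    (hM : IsUnit M)
    (hnb : ¬ ∃ N : ℕ, ∀ m : ℕ, ∀ i j : Fin n, |(M ^ m) i j| < (N : ℤ)) :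
    ∃ j : Fin n, ¬ FiniteDimensional k (Submodule.span k
      (Set.range fun m : ℕ =>
        (σ ^ m) (AddMonoidAlgebra.single (Pi.single j 1) (1 : k)))) := by
  classical
  -- the orbit of a variable consists of scaled monomials along columns of powers of M
  have orbit : ∀ (j : Fin n) (m : ℕ), ∃ c : kˣ,
      (σ ^ m) (AddMonoidAlgebra.single (Pi.single j 1) (1 : k)) =
        AddMonoidAlgebra.single (fun i => (M ^ m) i j) ((c : k)) := by
    intro j m
    induction m with
    | zero =>
      refine ⟨1, ?_⟩
      rw [pow_zero]
      show AddMonoidAlgebra.single (Pi.single j 1) (1 : k) = _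
      have h1 : (fun i => (M ^ 0) i j) = (Pi.single j 1 : Fin n → ℤ) := by
        funext i
        simp [Matrix.one_apply, Pi.single_apply, eq_comm]
      rw [h1]
      simp
    | succ m ih =>
      obtain ⟨c, hc⟩ := ih
      refine ⟨c * ∏ i, α i ^ (fun l => (M ^ m) l j) i, ?_⟩
      rw [pow_succ', AlgEquiv.mul_apply, hc,
        show AddMonoidAlgebra.single (fun i => (M ^ m) i j) ((c : k)) =
          (c : k) • AddMonoidAlgebra.single (fun i => (M ^ m) i j) (1 : k) from by
          rw [AddMonoidAlgebra.smul_single', mul_one],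
        map_smul, sigma_single σ M α hσ, AddMonoidAlgebra.smul_single']
      have hcol : M.mulVec (fun l => (M ^ m) l j) = fun i => (M ^ (m + 1)) i j := by
        funext i
        simp [Matrix.mulVec, dotProduct, pow_succ', Matrix.mul_apply]
      rw [hcol]
      congr 1
  -- some column set is infinite
  have hcol : ∃ j : Fin n, (Set.range fun m : ℕ => (fun i => (M ^ m) i j)).Infinite := by
    by_contra hfin
    push_neg at hfin
    apply hnb
    have hranges : (Set.range fun m : ℕ => M ^ m).Finite := by
      have hsub : (Set.range fun m : ℕ => M ^ m) ⊆
          (fun f : Fin n → Fin n → ℤ => Matrix.of fun i j => f j i) ''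
            Set.univ.pi (fun j => Set.range fun m : ℕ => (fun i => (M ^ m) i j)) := by
        rintro _ ⟨m, rfl⟩
        exact ⟨fun j i => (M ^ m) i j, fun j _ => ⟨m, rfl⟩, rfl⟩
      exact Set.Finite.subset ((Set.Finite.pi fun j => hfin j).image _) hsub
    set s : Finset (Matrix (Fin n) (Fin n) ℤ) := hranges.toFinset with hs
    refine ⟨(s.sup fun A => Finset.univ.sup fun p : Fin n × Fin n => (A p.1 p.2).natAbs) + 1,
      fun m i j => ?_⟩
    have hmem : M ^ m ∈ s := by simp [hs]
    have h1 : ((M ^ m) i j).natAbs ≤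
        Finset.univ.sup fun p : Fin n × Fin n => ((M ^ m) p.1 p.2).natAbs :=
      Finset.le_sup (f := fun p : Fin n × Fin n => ((M ^ m) p.1 p.2).natAbs)
        (Finset.mem_univ (i, j))
    have h2 : (Finset.univ.sup fun p : Fin n × Fin n => ((M ^ m) p.1 p.2).natAbs) ≤
        s.sup fun A => Finset.univ.sup fun p : Fin n × Fin n => (A p.1 p.2).natAbs :=
      Finset.le_sup (f := fun A : Matrix (Fin n) (Fin n) ℤ =>
        Finset.univ.sup fun p : Fin n × Fin n => (A p.1 p.2).natAbs) hmem
    rw [Int.abs_eq_natAbs]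
    exact_mod_cast Nat.lt_succ_of_le (h1.trans h2)
  obtain ⟨j, hj⟩ := hcol
  refine ⟨j, fun hFD => ?_⟩
  set P := Submodule.span k (Set.range fun m : ℕ =>
      (σ ^ m) (AddMonoidAlgebra.single (Pi.single j 1) (1 : k))) with hP
  set S := Set.range fun m : ℕ => (fun i => (M ^ m) i j) with hS
  -- each monomial single v 1, v ∈ S, lies in P
  have hmemP : ∀ v ∈ S, AddMonoidAlgebra.single v (1 : k) ∈ P := by
    rintro _ ⟨m, rfl⟩
    obtain ⟨c, hc⟩ := orbit j m
    have hmem : AddMonoidAlgebra.single (fun i => (M ^ m) i j) ((c : k)) ∈ P :=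
      Submodule.subset_span ⟨m, hc⟩
    have := Submodule.smul_mem P ((c⁻¹ : kˣ) : k) hmem
    rwa [AddMonoidAlgebra.smul_single', Units.inv_mul] at this
  -- these monomials are linearly independent
  have hLI : LinearIndependent k fun v : S =>
      AddMonoidAlgebra.single (v : Fin n → ℤ) (1 : k) := by
    have hb := (AddMonoidAlgebra.basis (Fin n → ℤ) k).linearIndependent
    have := hb.comp (Subtype.val : S → (Fin n → ℤ)) Subtype.val_injective
    exact this
  let g : S → P := fun v => ⟨AddMonoidAlgebra.single (v : Fin n → ℤ) (1 : k), hmemP v v.2⟩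
  have hLIg : LinearIndependent k g :=
    LinearIndependent.of_comp P.subtype (by exact hLI)
  have : Finite S := hLIg.finite
  exact hj (Set.toFinite S)
end

section
/- Let A be a ℤ-filtered k-algebra with filtration (F_i) and associated graded algebra gr(A), and let gr : A → gr(A) denote the leading-term map. For any finite-dimensional subspace W ⊆ A: (i) dim_k(gr(W)) = dim_k(W), where gr(W) is the span of {gr(w) : w ∈ W}; (ii) dim_k(W^m) ≥ dim_k((gr(W))^m) for all m ≥ 1. -/
open Module Submodule

section Zhang

variable {k A B : Type*} [Field k] [Ring A] [Algebra k A] [Ring B] [Algebra k B]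
  {F : ℤ → Submodule k A}

/-- every finset is contained in some filtration level -/
lemma zhang_bound (hmono : Monotone F)
    (hsep : ∀ a : A, a ≠ 0 → ∃ i : ℤ, a ∈ F i ∧ a ∉ F (i - 1)) (s : Finset A) :
    ∃ D : ℤ, ∀ a ∈ s, a ∈ F D := by
  classical
  induction s using Finset.induction_on with
  | empty => exact ⟨0, by simp⟩
  | @insert a s ha ih =>
    obtain ⟨D, hD⟩ := ih
    have : ∃ i : ℤ, a ∈ F i := by
      rcases eq_or_ne a 0 with rfl | h0
      · exact ⟨0, zero_mem _⟩
      · obtain ⟨i, hi, -⟩ := hsep a h0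
        exact ⟨i, hi⟩
    obtain ⟨i, hi⟩ := this
    refine ⟨max D i, ?_⟩
    intro b hb
    rcases Finset.mem_insert.mp hb with rfl | hb
    · exact hmono (le_max_right D i) hi
    · exact hmono (le_max_left D i) (hD b hb)

lemma zhang_main (hmono : Monotone F)
    (hsep : ∀ a : A, a ≠ 0 → ∃ i : ℤ, a ∈ F i ∧ a ∉ F (i - 1))
    {𝒜 : ℤ → Submodule k B} (hinternal : DirectSum.IsInternal 𝒜)
    {gr : A → B} (hgr0 : gr 0 = 0)
    {g : ∀ i : ℤ, F i →ₗ[k] B}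
    (hrange : ∀ i : ℤ, LinearMap.range (g i) = 𝒜 i)
    (hker : ∀ (i : ℤ) (a : F i), g i a = 0 ↔ (a : A) ∈ F (i - 1))
    (hgr : ∀ (i : ℤ) (a : F i), (a : A) ∉ F (i - 1) → gr (a : A) = g i a)
    (V : Submodule k A) (hV : FiniteDimensional k V) :
    FiniteDimensional k (span k (gr '' (V : Set A))) ∧
      finrank k (span k (gr '' (V : Set A))) = finrank k V := by
  generalize hn : finrank k V = n
  induction n using Nat.strong_induction_on generalizing V with
  | _ n IH =>
  haveI := hV
  rcases eq_or_ne V ⊥ with rfl | hbot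
  · have himg : gr '' ((⊥ : Submodule k A) : Set A) = {0} := by
      simp [hgr0]
    rw [himg, Submodule.span_zero_singleton]
    rw [finrank_bot] at hn
    exact ⟨inferInstance, by simp [hn.symm, finrank_bot]⟩
  -- nonzero case
  obtain ⟨v0, hv0V, hv0⟩ := Submodule.exists_mem_ne_zero_of_ne_bot hbot
  obtain ⟨i0, hi0, hi0'⟩ := hsep v0 hv0
  -- find a bound D with V ≤ F D
  obtain ⟨s, hs⟩ := (Submodule.fg_iff_finiteDimensional V).mpr hV
  obtain ⟨D, hD⟩ := zhang_bound hmono hsep s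
  have hVD : V ≤ F D := by
    rw [← hs, Submodule.span_le]
    intro a ha; exact hD a ha
  -- find the least d with V ≤ F d
  obtain ⟨d, hd, hdmin⟩ := Int.exists_least_of_bdd (P := fun z => V ≤ F z)
    ⟨i0, fun z hz => by
      by_contra hc
      push_neg at hc
      exact hi0' (hmono (by omega : z ≤ i0 - 1) (hz hv0V))⟩ ⟨D, hVD⟩
  have hnot : ¬ V ≤ F (d - 1) := fun h => by have := hdmin (d - 1) h; omega
  -- the leading-term linear map on V in degree d
  set h : V →ₗ[k] B := (g d).comp (Submodule.inclusion hd) with hdef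
  have hval : ∀ v : V, h v = g d ⟨(v : A), hd v.2⟩ := by
    intro v
    have : Submodule.inclusion hd v = ⟨(v : A), hd v.2⟩ := Subtype.ext rfl
    simp [hdef, this]
  have hkerh : ∀ v : V, h v = 0 ↔ (v : A) ∈ F (d - 1) := by
    intro v; rw [hval v]; exact hker d _
  have hgrh : ∀ v : V, (v : A) ∉ F (d - 1) → gr (v : A) = h v := by
    intro v hv; rw [hval v]; exact hgr d ⟨(v : A), hd v.2⟩ hv
  set V' : Submodule k A := V ⊓ F (d - 1) with hV'def
  have hV'le : V' ≤ V := inf_le_left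
  have hV'lt : V' < V := by
    obtain ⟨w0, hw0V, hw0⟩ := SetLike.not_le_iff_exists.mp hnot
    refine lt_of_le_of_ne hV'le fun hEq => hw0 ?_
    exact (hEq ▸ hw0V : w0 ∈ V').2
  haveI : FiniteDimensional k V' := Submodule.finiteDimensional_of_le hV'le
  have hlt : finrank k V' < n := hn ▸ Submodule.finrank_lt_finrank_of_lt hV'lt
  obtain ⟨hQfd, hQrank⟩ := IH (finrank k V') hlt V' inferInstance rfl
  set Q : Submodule k B := span k (gr '' (V' : Set A)) with hQdef
  set P : Submodule k B := LinearMap.range h with hPdef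
  haveI : FiniteDimensional k P := inferInstance
  -- span gr '' V = P ⊔ Q
  have hPle : P ≤ span k (gr '' (V : Set A)) := by
    rintro _ ⟨v, rfl⟩
    by_cases hv : (v : A) ∈ F (d - 1)
    · rw [(hkerh v).mpr hv]; exact zero_mem _
    · rw [← hgrh v hv]
      exact Submodule.subset_span ⟨(v : A), v.2, rfl⟩
  have hQle : Q ≤ span k (gr '' (V : Set A)) :=
    Submodule.span_mono (Set.image_mono hV'le)
  have hle2 : span k (gr '' (V : Set A)) ≤ P ⊔ Q := by
    rw [Submodule.span_le]
    rintro _ ⟨v, hv, rfl⟩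
    by_cases hv' : v ∈ F (d - 1)
    · exact le_sup_right (α := Submodule k B)
        (Submodule.subset_span ⟨v, ⟨hv, hv'⟩, rfl⟩)
    · have : gr v = h ⟨v, hv⟩ := hgrh ⟨v, hv⟩ hv'
      rw [this]
      exact le_sup_left (α := Submodule k B) ⟨⟨v, hv⟩, rfl⟩
  have hEq : span k (gr '' (V : Set A)) = P ⊔ Q :=
    le_antisymm hle2 (sup_le hPle hQle)
  -- disjointness from the internal grading
  have hP𝒜 : P ≤ 𝒜 d := by
    rintro _ ⟨v, rfl⟩
    rw [← hrange d, hval v]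
    exact ⟨_, rfl⟩
  have hQ𝒜 : Q ≤ ⨆ (j) (_ : j ≠ d), 𝒜 j := by
    rw [Submodule.span_le]
    rintro _ ⟨v, hv, rfl⟩
    rcases eq_or_ne v 0 with rfl | hv0'
    · rw [hgr0]; exact zero_mem _
    obtain ⟨i, hi, hi'⟩ := hsep v hv0'
    have hid : i ≤ d - 1 := by
      by_contra hc
      push_neg at hc
      exact hi' (hmono (by omega : d - 1 ≤ i - 1) hv.2)
    have hne : i ≠ d := by omega
    have : gr v ∈ 𝒜 i := by
      rw [hgr i ⟨v, hi⟩ hi', ← hrange i]; exact ⟨_, rfl⟩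
    exact le_iSup₂ (f := fun (j : ℤ) (_ : j ≠ d) => 𝒜 j) i hne this
  have hdisj : Disjoint P Q :=
    Disjoint.mono hP𝒜 hQ𝒜 (iSupIndep_def.mp hinternal.submodule_iSupIndep d)
  -- rank computation
  have hkerEq : LinearMap.ker h = Submodule.comap V.subtype V' := by
    ext v
    simp only [LinearMap.mem_ker, Submodule.mem_comap, hV'def, Submodule.mem_inf,
      Submodule.coe_subtype]
    rw [hkerh v]
    exact ⟨fun hh => ⟨v.2, hh⟩, fun hh => hh.2⟩
  have hkerRank : finrank k (LinearMap.ker h) = finrank k V' := by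
    rw [hkerEq]
    exact LinearEquiv.finrank_eq (Submodule.comapSubtypeEquivOfLe hV'le)
  have hrn : finrank k P + finrank k (LinearMap.ker h) = finrank k V :=
    LinearMap.finrank_range_add_finrank_ker h
  haveI hfd : FiniteDimensional k (P ⊔ Q : Submodule k B) := inferInstance
  have hsum : finrank k (P ⊔ Q : Submodule k B) = finrank k P + finrank k Q := by
    have := Submodule.finrank_sup_add_finrank_inf_eq P Q
    rw [hdisj.eq_bot, finrank_bot] at this
    omega
  constructor
  · rw [hEq]; exact hfd
  · rw [hEq, hsum, hQrank, ← hn, ← hrn, hkerRank]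

lemma zhang_mul
    (hmul : ∀ i j : ℤ, ∀ a ∈ F i, ∀ b ∈ F j, a * b ∈ F (i + j))
    (hsep : ∀ a : A, a ≠ 0 → ∃ i : ℤ, a ∈ F i ∧ a ∉ F (i - 1))
    {gr : A → B} (hgr0 : gr 0 = 0)
    {g : ∀ i : ℤ, F i →ₗ[k] B}
    (hker : ∀ (i : ℤ) (a : F i), g i a = 0 ↔ (a : A) ∈ F (i - 1))
    (hgr : ∀ (i : ℤ) (a : F i), (a : A) ∉ F (i - 1) → gr (a : A) = g i a)
    (hgmul : ∀ (i j : ℤ) (a : F i) (b : F j),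
      g (i + j) ⟨(a : A) * (b : A), hmul i j a a.2 b b.2⟩ = g i a * g j b)
    (P Q : Submodule k A) :
    span k (gr '' (P : Set A)) * span k (gr '' (Q : Set A)) ≤
      span k (gr '' ((P * Q : Submodule k A) : Set A)) := by
  rw [Submodule.span_mul_span, Submodule.span_le]
  rintro x hx
  obtain ⟨y, hy, z, hz, rfl⟩ := Set.mem_mul.mp hx
  obtain ⟨p, hp, rfl⟩ := hy
  obtain ⟨q, hq, rfl⟩ := hz
  rcases eq_or_ne p 0 with rfl | hp0
  · rw [hgr0, zero_mul]; exact zero_mem _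
  rcases eq_or_ne q 0 with rfl | hq0
  · rw [hgr0, mul_zero]; exact zero_mem _
  obtain ⟨i, hi, hi'⟩ := hsep p hp0
  obtain ⟨j, hj, hj'⟩ := hsep q hq0
  have hpq : p * q ∈ P * Q := Submodule.mul_mem_mul hp hq
  rw [hgr i ⟨p, hi⟩ hi', hgr j ⟨q, hj⟩ hj',
    ← hgmul i j ⟨p, hi⟩ ⟨q, hj⟩]
  by_cases hdrop : p * q ∈ F (i + j - 1)
  · rw [(hker (i + j) _).mpr hdrop]
    exact zero_mem _
  · rw [← hgr (i + j) _ hdrop]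
    exact Submodule.subset_span ⟨p * q, hpq, rfl⟩

end Zhang

/-- Zhang's lemma on the leading-term map of a `ℤ`-filtered algebra.  `A` is a `k`-algebra
with an exhaustive, separated `ℤ`-filtration `F`; `B` plays the role of the associated
graded algebra `gr(A)`, internally graded by `𝒜`, where the degree-`i` piece is the image
of the canonical linear map `g i : F i → B` with kernel `F (i-1)`, multiplication in `B`
being induced from that of `A` via the maps `g i`; `gr : A → B` is the leading-term map.
Then for any finite-dimensional subspace `W ⊆ A`:
(i) `dim gr(W) = dim W`, and (ii) `dim (W^m) ≥ dim ((gr W)^m)` for all `m ≥ 1`. -/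
theorem filtered_leading_term_dim (k A B : Type*) [Field k] [Ring A] [Algebra k A]
    [Ring B] [Algebra k B]
    (F : ℤ → Submodule k A) (hmono : Monotone F) (hone : (1 : A) ∈ F 0)
    (hmul : ∀ i j : ℤ, ∀ a ∈ F i, ∀ b ∈ F j, a * b ∈ F (i + j))
    (hsep : ∀ a : A, a ≠ 0 → ∃ i : ℤ, a ∈ F i ∧ a ∉ F (i - 1))
    (𝒜 : ℤ → Submodule k B) (hinternal : DirectSum.IsInternal 𝒜)
    (gr : A → B) (hgr0 : gr 0 = 0)
    (g : ∀ i : ℤ, F i →ₗ[k] B)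
    (hrange : ∀ i : ℤ, LinearMap.range (g i) = 𝒜 i)
    (hker : ∀ (i : ℤ) (a : F i), g i a = 0 ↔ (a : A) ∈ F (i - 1))
    (hgr : ∀ (i : ℤ) (a : F i), (a : A) ∉ F (i - 1) → gr (a : A) = g i a)
    (hgmul : ∀ (i j : ℤ) (a : F i) (b : F j),
      g (i + j) ⟨(a : A) * (b : A), hmul i j a a.2 b b.2⟩ = g i a * g j b)
    (W : Submodule k A) (hW : FiniteDimensional k W) :
    Module.finrank k (Submodule.span k (gr '' (W : Set A))) = Module.finrank k W ∧
      ∀ m : ℕ, 1 ≤ m →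
        Module.finrank k ((Submodule.span k (gr '' (W : Set A))) ^ m : Submodule k B)
          ≤ Module.finrank k ((W ^ m : Submodule k A)) := by
  constructor
  · exact (zhang_main hmono hsep hinternal hgr0 hrange hker hgr W hW).2
  · -- the key inclusion for powers
    have key : ∀ m : ℕ, 1 ≤ m →
        (Submodule.span k (gr '' (W : Set A))) ^ m ≤
          Submodule.span k (gr '' ((W ^ m : Submodule k A) : Set A)) := by
      intro m hm
      induction m with
      | zero => omega
      | succ m ih =>
        rcases Nat.eq_or_lt_of_le hm with hm1 | hm2
        · simp only [← hm1, pow_one]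
          exact le_rfl
        · have hm' : 1 ≤ m := by omega
          calc (Submodule.span k (gr '' (W : Set A))) ^ (m + 1)
              = (Submodule.span k (gr '' (W : Set A))) ^ m *
                  Submodule.span k (gr '' (W : Set A)) := pow_succ _ _
            _ ≤ Submodule.span k (gr '' ((W ^ m : Submodule k A) : Set A)) *
                  Submodule.span k (gr '' (W : Set A)) :=
                mul_le_mul' (ih hm') le_rfl
            _ ≤ Submodule.span k (gr '' ((W ^ m * W : Submodule k A) : Set A)) :=
                zhang_mul hmul hsep hgr0 hker hgr hgmul _ _
            _ = Submodule.span k (gr '' ((W ^ (m + 1) : Submodule k A) : Set A)) := by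
                rw [← pow_succ]
    intro m hm
    have hfg : (W ^ m : Submodule k A).FG :=
      ((Submodule.fg_iff_finiteDimensional W).mpr hW).pow m
    haveI : FiniteDimensional k (W ^ m : Submodule k A) :=
      (Submodule.fg_iff_finiteDimensional _).mp hfg
    obtain ⟨hfd, heq⟩ := zhang_main hmono hsep hinternal hgr0 hrange hker hgr
      (W ^ m) inferInstance
    calc Module.finrank k ((Submodule.span k (gr '' (W : Set A))) ^ m : Submodule k B)
        ≤ Module.finrank k
            (Submodule.span k (gr '' ((W ^ m : Submodule k A) : Set A))) :=
          Submodule.finrank_mono (key m hm)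
      _ = Module.finrank k ((W ^ m : Submodule k A)) := heq
end
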